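/- arXiv:2108.07522 — 3 statements merged into one kernel-verified Lean document; each statement's English description precedes it below -/
import Mathlib

section
/- If n, n₁, n₂ are integers with n₁, n₂ ≥ 3 and n₁ + n₂ = n + 2, then ⌊3n − √(12n−3)⌋ + 1 ≥ ⌊3n₁ − √(12n₁−3)⌋ + ⌊3n₂ − √(12n₂−3)⌋. -/
-- key lemma: the ceiling m of √(12k-3) satisfies either m² ≥ 12k (with m ≥ 6)
-- or 12k-3 is a perfect square, in which case m ≥ 9.
lemma ceil_sqrt_lb (k : ℤ) (hk : 3 ≤ k) :
    (12 * k ≤ ⌈Real.sqrt (12 * (k : ℝ) - 3)⌉ ^ 2 ∧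
      6 ≤ ⌈Real.sqrt (12 * (k : ℝ) - 3)⌉) ∨
    (12 * k - 3 ≤ ⌈Real.sqrt (12 * (k : ℝ) - 3)⌉ ^ 2 ∧
      9 ≤ ⌈Real.sqrt (12 * (k : ℝ) - 3)⌉) := by
  set s := Real.sqrt (12 * (k : ℝ) - 3) with hs
  have hk' : (3 : ℝ) ≤ (k : ℝ) := by exact_mod_cast hk
  have h33 : (33 : ℝ) ≤ 12 * (k : ℝ) - 3 := by linarith
  have hs2 : s ^ 2 = 12 * (k : ℝ) - 3 := Real.sq_sqrt (by linarith)
  have hsle : s ≤ (⌈s⌉ : ℝ) := Int.le_ceil s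
  have hs5 : (5 : ℝ) < s := by
    nlinarith [Real.sqrt_nonneg (12 * (k : ℝ) - 3)]
  have hm6 : 6 ≤ ⌈s⌉ := by
    have : (5 : ℝ) < (⌈s⌉ : ℝ) := lt_of_lt_of_le hs5 hsle
    exact_mod_cast (by exact_mod_cast this : (5:ℤ) < ⌈s⌉)
  have hge : 12 * k - 3 ≤ ⌈s⌉ ^ 2 := by
    have : (12 * (k:ℝ) - 3) ≤ ((⌈s⌉ : ℝ)) ^ 2 := by
      nlinarith
    exact_mod_cast this
  set m := ⌈s⌉ with hm
  have hdm : 12 * (m / 12) + m % 12 = m := Int.mul_ediv_add_emod m 12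
  have hmod : m ^ 2 % 12 = (m % 12) ^ 2 % 12 := by
    have hexp : m ^ 2 = (m % 12) ^ 2 + 12 * (2 * (m / 12) * (m % 12) + 12 * (m / 12) ^ 2) := by
      linear_combination (-(m + 12 * (m / 12) + m % 12)) * hdm
    rw [hexp, Int.add_mul_emod_self_left]
  obtain ⟨q, hq⟩ : ∃ q, m ^ 2 = q := ⟨_, rfl⟩
  rw [hq] at hmod hge ⊢
  have h0 : 0 ≤ m % 12 := Int.emod_nonneg m (by norm_num)
  have h1 : m % 12 < 12 := Int.emod_lt_of_pos m (by norm_num)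
  set r := m % 12 with hr
  interval_cases r <;> norm_num at hmod <;> omega

theorem floor_sqrt_ineq (n n₁ n₂ : ℤ) (h₁ : 3 ≤ n₁) (h₂ : 3 ≤ n₂)
    (hsum : n₁ + n₂ = n + 2) :
    ⌊3 * (n₁ : ℝ) - Real.sqrt (12 * (n₁ : ℝ) - 3)⌋ +
      ⌊3 * (n₂ : ℝ) - Real.sqrt (12 * (n₂ : ℝ) - 3)⌋ ≤
    ⌊3 * (n : ℝ) - Real.sqrt (12 * (n : ℝ) - 3)⌋ + 1 := by
  have key : ∀ k : ℤ, ⌊3 * (k : ℝ) - Real.sqrt (12 * (k : ℝ) - 3)⌋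
      = 3 * k - ⌈Real.sqrt (12 * (k : ℝ) - 3)⌉ := by
    intro k
    rw [show 3 * (k : ℝ) - Real.sqrt (12 * (k : ℝ) - 3)
        = ((3 * k : ℤ) : ℝ) + (-(Real.sqrt (12 * (k : ℝ) - 3))) by push_cast; ring,
      Int.floor_intCast_add, Int.floor_neg]
    ring
  rw [key, key, key]
  set m₁ := ⌈Real.sqrt (12 * (n₁ : ℝ) - 3)⌉ with hm₁
  set m₂ := ⌈Real.sqrt (12 * (n₂ : ℝ) - 3)⌉ with hm₂
  have hceil : ⌈Real.sqrt (12 * (n : ℝ) - 3)⌉ ≤ m₁ + m₂ - 5 := by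
    apply Int.ceil_le.2
    have hsq : 12 * (n : ℝ) - 3 ≤ ((m₁ + m₂ - 5 : ℤ) : ℝ) ^ 2 := by
      have hint : 12 * n - 3 ≤ (m₁ + m₂ - 5) ^ 2 := by
        rcases ceil_sqrt_lb n₁ h₁ with ⟨ha, ha6⟩ | ⟨ha, ha6⟩ <;>
          rcases ceil_sqrt_lb n₂ h₂ with ⟨hb, hb6⟩ | ⟨hb, hb6⟩ <;>
          nlinarith [mul_nonneg (by linarith : (0:ℤ) ≤ m₁ - 6)
            (by linarith : (0:ℤ) ≤ m₂ - 6)]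
      exact_mod_cast hint
    calc Real.sqrt (12 * (n : ℝ) - 3)
        ≤ Real.sqrt (((m₁ + m₂ - 5 : ℤ) : ℝ) ^ 2) := Real.sqrt_le_sqrt hsq
      _ = ((m₁ + m₂ - 5 : ℤ) : ℝ) := by
          have h1 : 6 ≤ m₁ := by
            rcases ceil_sqrt_lb n₁ h₁ with ⟨_, h⟩ | ⟨_, h⟩ <;> omega
          have h2 : 6 ≤ m₂ := by
            rcases ceil_sqrt_lb n₂ h₂ with ⟨_, h⟩ | ⟨_, h⟩ <;> omega
          have h0 : (0 : ℤ) ≤ m₁ + m₂ - 5 := by omega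
          exact Real.sqrt_sq (by exact_mod_cast h0)
  omega
end

section
/- If n, n₁, n₂ are integers with n₁, n₂ ≥ 3 and n₁ + n₂ = n + 2, then √(12n−3) + 5 ≤ ⌈√(12n₁−3)⌉ + ⌈√(12n₂−3)⌉. -/
lemma ceil_sq_ge (m : ℤ) (hm : 3 ≤ m) :
    12 * (m : ℝ) - 3 ≤ ((⌈Real.sqrt (12 * (m : ℝ) - 3)⌉ : ℤ) : ℝ) ^ 2 := by
  have hm' : (3 : ℝ) ≤ (m : ℝ) := by exact_mod_cast hm
  have hpos : (0 : ℝ) ≤ 12 * (m : ℝ) - 3 := by linarith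
  have h1 := Real.sq_sqrt hpos
  have h2 := Real.sqrt_nonneg (12 * (m : ℝ) - 3)
  have h3 := Int.le_ceil (Real.sqrt (12 * (m : ℝ) - 3))
  nlinarith

lemma ceil_lt_of_sq_lt (c m : ℤ) (hc : (0:ℝ) ≤ (c:ℝ)) (h : ((c:ℝ))^2 < 12 * (m : ℝ) - 3) :
    c < ⌈Real.sqrt (12 * (m : ℝ) - 3)⌉ := by
  have h1 : (c : ℝ) < Real.sqrt (12 * (m : ℝ) - 3) := by
    have := Real.lt_sqrt (x := (c:ℝ)) hc (y := 12 * (m : ℝ) - 3)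
    exact this.mpr h
  exact Int.lt_ceil.mpr h1

theorem sqrt_ceil_ineq (n n₁ n₂ : ℤ) (h₁ : 3 ≤ n₁) (h₂ : 3 ≤ n₂)
    (hsum : n₁ + n₂ = n + 2) :
    Real.sqrt (12 * (n : ℝ) - 3) + 5 ≤
      (⌈Real.sqrt (12 * (n₁ : ℝ) - 3)⌉ : ℝ) + (⌈Real.sqrt (12 * (n₂ : ℝ) - 3)⌉ : ℝ) := by
  set k₁ := ⌈Real.sqrt (12 * (n₁ : ℝ) - 3)⌉ with hk₁
  set k₂ := ⌈Real.sqrt (12 * (n₂ : ℝ) - 3)⌉ with hk₂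
  have hn1 : (3 : ℝ) ≤ (n₁ : ℝ) := by exact_mod_cast h₁
  have hn2 : (3 : ℝ) ≤ (n₂ : ℝ) := by exact_mod_cast h₂
  have hsr : (n₁ : ℝ) + (n₂ : ℝ) = (n : ℝ) + 2 := by exact_mod_cast hsum
  have b1 : 12 * (n₁ : ℝ) - 3 ≤ ((k₁ : ℤ) : ℝ) ^ 2 := ceil_sq_ge n₁ h₁
  have b2 : 12 * (n₂ : ℝ) - 3 ≤ ((k₂ : ℤ) : ℝ) ^ 2 := ceil_sq_ge n₂ h₂
  have c1 : 6 ≤ k₁ := by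
    have := ceil_lt_of_sq_lt 5 n₁ (by norm_num) (by push_cast; nlinarith)
    omega
  have c2 : 6 ≤ k₂ := by
    have := ceil_lt_of_sq_lt 5 n₂ (by norm_num) (by push_cast; nlinarith)
    omega
  have c1r : (6 : ℝ) ≤ (k₁ : ℝ) := by exact_mod_cast c1
  have c2r : (6 : ℝ) ≤ (k₂ : ℝ) := by exact_mod_cast c2
  have key : 12 * (n : ℝ) - 3 ≤ ((k₁ : ℝ) + (k₂ : ℝ) - 5) ^ 2 := by
    rcases le_or_gt 4 n₁ with h4 | h4
    · have c1' : 7 ≤ k₁ := by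
        have := ceil_lt_of_sq_lt 6 n₁ (by norm_num)
          (by push_cast; nlinarith [show (4:ℝ) ≤ (n₁:ℝ) by exact_mod_cast h4])
        omega
      have c1r' : (7 : ℝ) ≤ (k₁ : ℝ) := by exact_mod_cast c1'
      nlinarith [mul_nonneg (by linarith : (0:ℝ) ≤ (k₁:ℝ) - 7) (by linarith : (0:ℝ) ≤ (k₂:ℝ) - 6)]
    · rcases le_or_gt 4 n₂ with h5 | h5
      · have c2' : 7 ≤ k₂ := by
          have := ceil_lt_of_sq_lt 6 n₂ (by norm_num)
            (by push_cast; nlinarith [show (4:ℝ) ≤ (n₂:ℝ) by exact_mod_cast h5])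
          omega
        have c2r' : (7 : ℝ) ≤ (k₂ : ℝ) := by exact_mod_cast c2'
        nlinarith [mul_nonneg (by linarith : (0:ℝ) ≤ (k₁:ℝ) - 6) (by linarith : (0:ℝ) ≤ (k₂:ℝ) - 7)]
      · -- n₁ = n₂ = 3, n = 4
        have e1 : n₁ = 3 := by omega
        have e2 : n₂ = 3 := by omega
        have en : n = 4 := by omega
        subst en
        push_cast
        nlinarith [mul_nonneg (by linarith : (0:ℝ) ≤ (k₁:ℝ) - 6) (by linarith : (0:ℝ) ≤ (k₂:ℝ) - 6)]
  have hT : (0 : ℝ) ≤ (k₁ : ℝ) + (k₂ : ℝ) - 5 := by linarith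
  have : Real.sqrt (12 * (n : ℝ) - 3) ≤ (k₁ : ℝ) + (k₂ : ℝ) - 5 := by
    calc Real.sqrt (12 * (n : ℝ) - 3) ≤ Real.sqrt (((k₁ : ℝ) + (k₂ : ℝ) - 5) ^ 2) :=
          Real.sqrt_le_sqrt key
      _ = (k₁ : ℝ) + (k₂ : ℝ) - 5 := Real.sqrt_sq hT
  linarith
end

section
/- Let c = (√12 + √(2π√3))/2. For all integers n₁, n₂ ≥ 2 with n = n₁ + n₂ − 1, one has 3/c + √(n − 1/4) ≤ √(n₁ − 1/4) + √(n₂ − 1/4). -/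
/-!
The map `f m = √(m - 1/4)` is concave, so its increments shrink as the base point grows.
Comparing with the base point `2` twice gives `f (n₁ + n₂ - 1) - f n₁ ≤ f (n₂ + 1) - f 2`
and `f (n₂ + 1) - f n₂ ≤ f 3 - f 2`, hence `f n + (2 f 2 - f 3) ≤ f n₁ + f n₂`. Numerically
`2 f 2 - f 3 = √7 - √11 / 2 ≈ 0.988`, while `3 / c ≈ 0.887`.
-/

open Real

lemma sqrt_add_sub_sqrt_eq_div {a t : ℝ} (ha : 0 ≤ a) (ht : 0 < t) :
    √(a + t) - √a = t / (√(a + t) + √a) := by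
  have hpos : 0 < √(a + t) + √a := by positivity
  rw [eq_div_iff hpos.ne', mul_comm, ← sq_sub_sq, sq_sqrt (by linarith), sq_sqrt ha]
  ring

lemma sqrt_add_sub_sqrt_le_of_le {a b t : ℝ} (hb : 0 ≤ b) (hba : b ≤ a) (ht : 0 ≤ t) :
    √(a + t) - √a ≤ √(b + t) - √b := by
  rcases ht.eq_or_lt with rfl | ht
  · simp
  rw [sqrt_add_sub_sqrt_eq_div (hb.trans hba) ht, sqrt_add_sub_sqrt_eq_div hb ht]
  exact div_le_div_of_nonneg_left ht.le (by positivity)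
    (add_le_add (sqrt_le_sqrt (by linarith)) (sqrt_le_sqrt hba))

lemma sqrt_sub_quarter_add_le {x y : ℝ} (hx : 2 ≤ x) (hy : 2 ≤ y) :
    √(x + y - 1 - 1 / 4) + 2 * √(2 - 1 / 4) ≤
      √(x - 1 / 4) + √(y - 1 / 4) + √(3 - 1 / 4) := by
  have hxy : √(x + y - 1 - 1 / 4) - √(x - 1 / 4) ≤ √(y + 1 - 1 / 4) - √(2 - 1 / 4) := by
    convert sqrt_add_sub_sqrt_le_of_le (a := x - 1 / 4) (b := 2 - 1 / 4) (t := y - 1)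
      (by norm_num) (by linarith) (by linarith) using 3 <;> ring
  have hy1 : √(y + 1 - 1 / 4) - √(y - 1 / 4) ≤ √(3 - 1 / 4) - √(2 - 1 / 4) := by
    convert sqrt_add_sub_sqrt_le_of_le (a := y - 1 / 4) (b := 2 - 1 / 4) (t := 1)
      (by norm_num) (by linarith) zero_le_one using 3 <;> ring
  linarith

lemma three_div_le_two_sqrt_sub_sqrt :
    3 / ((√12 + √(2 * π * √3)) / 2) ≤ 2 * √(2 - 1 / 4) - √(3 - 1 / 4) := by
  have h3 : (1.73 : ℝ) ≤ √3 := (le_sqrt (by norm_num) (by norm_num)).2 (by norm_num)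
  have h12 : (3.46 : ℝ) ≤ √12 := (le_sqrt (by norm_num) (by norm_num)).2 (by norm_num)
  have hpi3 : (3.29 : ℝ) ≤ √(2 * π * √3) :=
    (le_sqrt (by norm_num) (by positivity)).2 (by nlinarith [pi_gt_d2])
  have h7 : (1.32 : ℝ) ≤ √(2 - 1 / 4) := (le_sqrt (by norm_num) (by norm_num)).2 (by norm_num)
  have h11 : √(3 - 1 / 4) ≤ 1.66 := sqrt_le_iff.2 ⟨by norm_num, by norm_num⟩
  have hc : 3 / ((√12 + √(2 * π * √3)) / 2) ≤ 3 / 3.3 :=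
    div_le_div_of_nonneg_left (by norm_num) (by norm_num) (by linarith)
  linarith

theorem sqrt_quarter_ineq (n₁ n₂ n : ℤ) (h₁ : 2 ≤ n₁) (h₂ : 2 ≤ n₂)
    (hn : n = n₁ + n₂ - 1) :
    3 / ((Real.sqrt 12 + Real.sqrt (2 * Real.pi * Real.sqrt 3)) / 2) +
      Real.sqrt ((n : ℝ) - 1 / 4) ≤
    Real.sqrt ((n₁ : ℝ) - 1 / 4) + Real.sqrt ((n₂ : ℝ) - 1 / 4) := by
  have hn' : (n : ℝ) = n₁ + n₂ - 1 := by rw [hn]; push_cast; ring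
  have hsum := sqrt_sub_quarter_add_le (x := n₁) (y := n₂) (by exact_mod_cast h₁)
    (by exact_mod_cast h₂)
  rw [hn']
  linarith [three_div_le_two_sqrt_sub_sqrt]
end
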